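/- arXiv:1410.2032 — 2 statements merged into one kernel-verified Lean document; each statement's English description precedes it below -/
import Mathlib

section
/- Killing virial theorem in coordinates: let q : ℝ → U ⊆ ℝⁿ solve the Euler–Lagrange equations of L(q,v) = (1/2)g_{ij}(q)v^i v^j - V(q) with g a smooth Riemannian metric on U and V smooth. Let X = X^i ∂/∂q^i be a Killing vector field of g, and suppose G(t) = g_{ij}(q(t)) X^i(q(t)) q'^j(t) is bounded and the time average of (X^i ∂V/∂q^i)(q(t)) exists. Then ⟨X^i(q(t)) (∂V/∂q^i)(q(t))⟩ = 0. -/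
open Filter

private lemma clm_apply_eq_sum {n : ℕ} (L : (Fin n → ℝ) →L[ℝ] ℝ) (v : Fin n → ℝ) :
    L v = ∑ k, v k * L (Pi.single k 1) := by
  conv_lhs => rw [← Finset.univ_sum_single v]
  rw [map_sum]
  refine Finset.sum_congr rfl fun k _ => ?_
  have : Pi.single k (v k) = v k • (Pi.single k 1 : Fin n → ℝ) := by
    rw [← Pi.single_smul, smul_eq_mul, mul_one]
  rw [this, map_smul, smul_eq_mul]

private lemma chain_rule {n : ℕ} {f : (Fin n → ℝ) → ℝ} {q : ℝ → Fin n → ℝ} {t : ℝ}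
    (hf : DifferentiableAt ℝ f (q t)) (hqd : ∀ i, DifferentiableAt ℝ (fun s => q s i) t) :
    HasDerivAt (fun s => f (q s))
      (∑ k, deriv (fun u => q u k) t * fderiv ℝ f (q t) (Pi.single k 1)) t := by
  have hq' : HasDerivAt q (fun k => deriv (fun u => q u k) t) t :=
    hasDerivAt_pi.2 fun i => (hqd i).hasDerivAt
  have h := hf.hasFDerivAt.comp_hasDerivAt t hq'
  rw [clm_apply_eq_sum] at h
  exact h

private lemma sum3_cyc {M : Type*} [AddCommMonoid M] {n : ℕ} (f : Fin n → Fin n → Fin n → M) :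
    ∑ i, ∑ j, ∑ k, f i j k = ∑ j, ∑ k, ∑ i, f i j k := by
  rw [Finset.sum_comm]
  exact Finset.sum_congr rfl fun j _ => Finset.sum_comm

private lemma alg_identity {n : ℕ} (g DX : Fin n → Fin n → ℝ)
    (Dg : Fin n → Fin n → Fin n → ℝ) (Xp v dV : Fin n → ℝ)
    (hsym : ∀ i j, g i j = g j i)
    (hK : ∀ i j, (∑ k, Xp k * Dg i j k) + (∑ k, g i k * DX k j) + (∑ k, g j k * DX k i) = 0) :
    ∑ i, ((∑ k, v k * DX i k) * (∑ j, g i j * v j)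
      + Xp i * ((1/2) * (∑ j, ∑ k, Dg j k i * v j * v k) - dV i))
    = -∑ i, Xp i * dV i := by
  have key : ∀ j k, (∑ i, Xp i * Dg j k i)
      = -((∑ i, g j i * DX i k) + (∑ i, g k i * DX i j)) := by
    intro j k
    have := hK j k
    linarith
  set T : ℝ := ∑ j, ∑ k, ∑ i, g j i * DX i k * v j * v k with hT
  have ha : ∑ i, (∑ k, v k * DX i k) * (∑ j, g i j * v j) = T := by
    calc ∑ i, (∑ k, v k * DX i k) * (∑ j, g i j * v j)
        = ∑ i, ∑ j, ∑ k, g j i * DX i k * v j * v k := by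
          simp only [Finset.sum_mul, Finset.mul_sum]
          refine Finset.sum_congr rfl fun i _ => Finset.sum_congr rfl fun j _ =>
            Finset.sum_congr rfl fun k _ => ?_
          rw [hsym i j]; ring
      _ = T := sum3_cyc (fun i j k => g j i * DX i k * v j * v k)
  have hb : ∑ j, ∑ k, (∑ i, g k i * DX i j) * (v j * v k) = T := by
    calc ∑ j, ∑ k, (∑ i, g k i * DX i j) * (v j * v k)
        = ∑ j, ∑ k, ∑ i, g k i * DX i j * v j * v k := by
          simp only [Finset.sum_mul]
          refine Finset.sum_congr rfl fun j _ => Finset.sum_congr rfl fun k _ =>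
            Finset.sum_congr rfl fun i _ => by ring
      _ = ∑ k, ∑ j, ∑ i, g k i * DX i j * v j * v k := Finset.sum_comm
      _ = T := by
          refine Finset.sum_congr rfl fun a _ => Finset.sum_congr rfl fun b _ =>
            Finset.sum_congr rfl fun i _ => by ring
  have hc : ∑ j, ∑ k, (∑ i, g j i * DX i k) * (v j * v k) = T := by
    refine Finset.sum_congr rfl fun j _ => Finset.sum_congr rfl fun k _ => ?_
    rw [Finset.sum_mul]
    exact Finset.sum_congr rfl fun i _ => by ring
  have e2 : ∑ i, Xp i * ((1/2) * (∑ j, ∑ k, Dg j k i * v j * v k))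
      = (1/2) * ∑ j, ∑ k, (∑ i, Xp i * Dg j k i) * (v j * v k) := by
    calc ∑ i, Xp i * ((1/2) * (∑ j, ∑ k, Dg j k i * v j * v k))
        = ∑ i, ∑ j, ∑ k, Xp i * Dg j k i * v j * v k * (1/2) := by
          simp only [Finset.mul_sum]
          refine Finset.sum_congr rfl fun i _ => Finset.sum_congr rfl fun j _ =>
            Finset.sum_congr rfl fun k _ => by ring
      _ = ∑ j, ∑ k, ∑ i, Xp i * Dg j k i * v j * v k * (1/2) :=
          sum3_cyc (fun i j k => Xp i * Dg j k i * v j * v k * (1/2))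
      _ = (1/2) * ∑ j, ∑ k, (∑ i, Xp i * Dg j k i) * (v j * v k) := by
          simp only [Finset.mul_sum, Finset.sum_mul]
          refine Finset.sum_congr rfl fun j _ => Finset.sum_congr rfl fun k _ =>
            Finset.sum_congr rfl fun i _ => by ring
  have e3 : ∑ j, ∑ k, (∑ i, Xp i * Dg j k i) * (v j * v k) = -(2 * T) := by
    have h1 : ∑ j, ∑ k, (∑ i, Xp i * Dg j k i) * (v j * v k)
        = ∑ j, ∑ k, (-((∑ i, g j i * DX i k) + (∑ i, g k i * DX i j))) * (v j * v k) := by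
      refine Finset.sum_congr rfl fun j _ => Finset.sum_congr rfl fun k _ => ?_
      rw [key j k]
    rw [h1]
    have h2 : ∀ j k : Fin n, (-((∑ i : Fin n, g j i * DX i k) + (∑ i : Fin n, g k i * DX i j))) * (v j * v k)
        = -((∑ i, g j i * DX i k) * (v j * v k)) + -((∑ i, g k i * DX i j) * (v j * v k)) := by
      intro j k; ring
    calc ∑ j, ∑ k, (-((∑ i : Fin n, g j i * DX i k) + (∑ i : Fin n, g k i * DX i j))) * (v j * v k)
        = ∑ j, ∑ k, (-((∑ i, g j i * DX i k) * (v j * v k)) + -((∑ i, g k i * DX i j) * (v j * v k))) := by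
          refine Finset.sum_congr rfl fun j _ => Finset.sum_congr rfl fun k _ => h2 j k
      _ = -(∑ j, ∑ k, (∑ i, g j i * DX i k) * (v j * v k))
          + -(∑ j, ∑ k, (∑ i, g k i * DX i j) * (v j * v k)) := by
          simp only [Finset.sum_add_distrib, Finset.sum_neg_distrib]
      _ = -(2 * T) := by rw [hb, hc]; ring
  calc ∑ i, ((∑ k, v k * DX i k) * (∑ j, g i j * v j)
        + Xp i * ((1/2) * (∑ j, ∑ k, Dg j k i * v j * v k) - dV i))
      = (∑ i, (∑ k, v k * DX i k) * (∑ j, g i j * v j))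
        + ((∑ i, Xp i * ((1/2) * (∑ j, ∑ k, Dg j k i * v j * v k)))
          - ∑ i, Xp i * dV i) := by
        rw [Finset.sum_add_distrib]
        congr 1
        simp only [mul_sub]
        rw [Finset.sum_sub_distrib]
    _ = T + ((1/2) * (-(2 * T)) - ∑ i, Xp i * dV i) := by rw [ha, e2, e3]
    _ = -∑ i, Xp i * dV i := by ring

/-- Killing virial theorem in coordinates. Along a solution of the
Euler–Lagrange equations of `L = ½ g_{ij} v^i v^j - V`, with `X` a Killing
vector field of `g` and `G = g_{ij} X^i q'^j` bounded, the time average of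
`X^i ∂V/∂q^i` (assumed to exist) vanishes. -/
theorem killing_virial_coords {n : ℕ} (U : Set (Fin n → ℝ)) (hU : IsOpen U)
    (g : (Fin n → ℝ) → Fin n → Fin n → ℝ)
    (V : (Fin n → ℝ) → ℝ) (X : (Fin n → ℝ) → Fin n → ℝ)
    (q : ℝ → Fin n → ℝ)
    (hg : ∀ i j, ContDiffOn ℝ (⊤ : ℕ∞) (fun p => g p i j) U)
    (hgsym : ∀ p ∈ U, ∀ i j, g p i j = g p j i)
    (hgpos : ∀ p ∈ U, ∀ v : Fin n → ℝ, v ≠ 0 → 0 < ∑ i, ∑ j, g p i j * v i * v j)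
    (hV : ContDiffOn ℝ (⊤ : ℕ∞) V U)
    (hX : ∀ k, ContDiffOn ℝ (⊤ : ℕ∞) (fun p => X p k) U)
    (hq : ∀ i, ContDiff ℝ 2 (fun t => q t i))
    (hrange : ∀ t : ℝ, q t ∈ U)
    -- Killing equations: `X^k ∂_k g_{ij} + g_{ik} ∂_j X^k + g_{jk} ∂_i X^k = 0`
    (hKilling : ∀ p ∈ U, ∀ i j : Fin n,
      (∑ k, X p k * fderiv ℝ (fun p' => g p' i j) p (Pi.single k 1))
        + (∑ k, g p i k * fderiv ℝ (fun p' => X p' k) p (Pi.single j 1))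
        + (∑ k, g p j k * fderiv ℝ (fun p' => X p' k) p (Pi.single i 1)) = 0)
    -- Euler–Lagrange equations
    (hEL : ∀ (t : ℝ) (i : Fin n),
      deriv (fun s => ∑ j, g (q s) i j * deriv (fun u => q u j) s) t =
        (1 / 2) * (∑ j, ∑ k, fderiv ℝ (fun p => g p j k) (q t) (Pi.single i 1)
            * deriv (fun u => q u j) t * deriv (fun u => q u k) t)
          - fderiv ℝ V (q t) (Pi.single i 1))
    (M : ℝ)
    (hG : ∀ t : ℝ, 0 ≤ t →
      |∑ i, ∑ j, g (q t) i j * X (q t) i * deriv (fun u => q u j) t| ≤ M)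
    (A : ℝ)
    (hA : Tendsto (fun τ : ℝ => (1 / τ) * ∫ t in (0:ℝ)..τ,
        ∑ i, X (q t) i * fderiv ℝ V (q t) (Pi.single i 1)) atTop (nhds A)) :
    A = 0 := by
  -- basic differentiability facts
  have hqd : ∀ (i : Fin n) (t : ℝ), DifferentiableAt ℝ (fun s => q s i) t := fun i t =>
    ((hq i).differentiable (by norm_num)).differentiableAt
  have hvd : ∀ (j : Fin n) (t : ℝ), DifferentiableAt ℝ (deriv (fun u => q u j)) t := by
    intro j t
    have h' : ContDiff ℝ ((1:ℕ) + 1) (fun u => q u j) := by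
      have := hq j; norm_num at this ⊢; exact this
    exact (((contDiff_succ_iff_deriv.mp h').2.2).differentiable (by simp)).differentiableAt
  have hmem : ∀ t, U ∈ nhds (q t) := fun t => hU.mem_nhds (hrange t)
  have hfg : ∀ (i j : Fin n) (t : ℝ), DifferentiableAt ℝ (fun p => g p i j) (q t) := fun i j t =>
    ((hg i j).differentiableOn (by simp)).differentiableAt (hmem t)
  have hfX : ∀ (k : Fin n) (t : ℝ), DifferentiableAt ℝ (fun p => X p k) (q t) := fun k t =>
    ((hX k).differentiableOn (by simp)).differentiableAt (hmem t)
  have hfV : ∀ t : ℝ, DifferentiableAt ℝ V (q t) := fun t =>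
    (hV.differentiableOn (by simp)).differentiableAt (hmem t)
  set F : ℝ → ℝ := fun t => ∑ i, X (q t) i * fderiv ℝ V (q t) (Pi.single i 1) with hF
  set G : ℝ → ℝ := fun t => ∑ i, ∑ j, g (q t) i j * X (q t) i * deriv (fun u => q u j) t with hGdef
  -- Step A : G' = -F
  have hG' : ∀ t : ℝ, HasDerivAt G (-(F t)) t := by
    intro t
    set v : Fin n → ℝ := fun k => deriv (fun u => q u k) t with hv
    -- P i : momentum component
    have hPd : ∀ i : Fin n, DifferentiableAt ℝ
        (fun s => ∑ j, g (q s) i j * deriv (fun u => q u j) s) t := by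
      intro i
      exact DifferentiableAt.fun_sum fun j _ =>
        ((chain_rule (hfg i j t) (fun k => hqd k t)).differentiableAt).mul (hvd j t)
    have hP' : ∀ i : Fin n, HasDerivAt
        (fun s => ∑ j, g (q s) i j * deriv (fun u => q u j) s)
        ((1 / 2) * (∑ j, ∑ k, fderiv ℝ (fun p => g p j k) (q t) (Pi.single i 1)
            * v j * v k) - fderiv ℝ V (q t) (Pi.single i 1)) t := by
      intro i
      have h := (hPd i).hasDerivAt
      rwa [hEL t i] at h
    have hXd : ∀ i : Fin n, HasDerivAt (fun s => X (q s) i)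
        (∑ k, v k * fderiv ℝ (fun p => X p i) (q t) (Pi.single k 1)) t :=
      fun i => chain_rule (hfX i t) (fun k => hqd k t)
    have hG2 : HasDerivAt (fun s => ∑ i, X (q s) i *
        ∑ j, g (q s) i j * deriv (fun u => q u j) s)
        (∑ i, ((∑ k, v k * fderiv ℝ (fun p => X p i) (q t) (Pi.single k 1)) *
            (∑ j, g (q t) i j * v j)
          + X (q t) i * ((1 / 2) * (∑ j, ∑ k, fderiv ℝ (fun p => g p j k) (q t) (Pi.single i 1)
            * v j * v k) - fderiv ℝ V (q t) (Pi.single i 1)))) t :=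
      HasDerivAt.fun_sum fun i _ => (hXd i).mul (hP' i)
    have hGeq : G = fun s => ∑ i, X (q s) i * ∑ j, g (q s) i j * deriv (fun u => q u j) s := by
      funext s
      simp only [hGdef, Finset.mul_sum]
      exact Finset.sum_congr rfl fun i _ => Finset.sum_congr rfl fun j _ => by ring
    rw [hGeq]
    convert hG2 using 1
    have := alg_identity (g (q t)) (fun k i => fderiv ℝ (fun p => X p k) (q t) (Pi.single i 1))
      (fun j k i => fderiv ℝ (fun p => g p j k) (q t) (Pi.single i 1))
      (X (q t)) v (fun i => fderiv ℝ V (q t) (Pi.single i 1))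
      (hgsym (q t) (hrange t)) (hKilling (q t) (hrange t))
    rw [hF]
    simp only at this ⊢
    rw [← this]
  -- Step B : F continuous
  have hqc : Continuous q := continuous_pi fun i => (hq i).continuous
  have hFc : Continuous F := by
    refine continuous_finset_sum _ fun i _ => Continuous.mul ?_ ?_
    · exact (hX i).continuousOn.comp_continuous hqc hrange
    · have h1 : ContinuousOn (fderiv ℝ V) U :=
        hV.continuousOn_fderiv_of_isOpen hU (by simp)
      have h2 : Continuous fun t => fderiv ℝ V (q t) := h1.comp_continuous hqc hrange
      exact (ContinuousLinearMap.apply ℝ ℝ (Pi.single i 1)).continuous.comp h2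
  -- Step C : FTC
  have hFTC : ∀ τ : ℝ, (∫ t in (0:ℝ)..τ, F t) = G 0 - G τ := by
    intro τ
    have h := intervalIntegral.integral_eq_sub_of_hasDerivAt
      (f := G) (f' := fun t => -(F t)) (a := 0) (b := τ)
      (fun x _ => hG' x) ((hFc.neg).intervalIntegrable 0 τ)
    have h2 : (∫ t in (0:ℝ)..τ, -(F t)) = -∫ t in (0:ℝ)..τ, F t := by
      rw [intervalIntegral.integral_neg]
    rw [h2] at h
    linarith
  -- Step D : conclude
  have hbound : ∀ τ : ℝ, 1 ≤ τ → |(1 / τ) * ∫ t in (0:ℝ)..τ, F t| ≤ 2 * M / τ := by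
    intro τ hτ
    have hτ0 : 0 < τ := lt_of_lt_of_le one_pos hτ
    rw [hFTC τ, abs_mul, abs_of_pos (by positivity : (0:ℝ) < 1 / τ)]
    have h0 : |G 0| ≤ M := hG 0 le_rfl
    have h1 : |G τ| ≤ M := hG τ hτ0.le
    have : |G 0 - G τ| ≤ 2 * M := by
      calc |G 0 - G τ| ≤ |G 0| + |G τ| := abs_sub _ _
        _ ≤ 2 * M := by linarith
    calc (1 / τ) * |G 0 - G τ| ≤ (1 / τ) * (2 * M) := by
          apply mul_le_mul_of_nonneg_left this (by positivity)
      _ = 2 * M / τ := by ring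
  have htend0 : Tendsto (fun τ : ℝ => (1 / τ) * ∫ t in (0:ℝ)..τ, F t) atTop (nhds 0) := by
    rw [tendsto_zero_iff_abs_tendsto_zero]
    refine squeeze_zero' (Eventually.of_forall fun τ => abs_nonneg _)
      (eventually_atTop.2 ⟨1, fun τ hτ => hbound τ hτ⟩) ?_
    exact Tendsto.div_atTop tendsto_const_nhds tendsto_id
  exact tendsto_nhds_unique hA htend0
end

section
/- Two-metric virial theorem: let g and g' be Riemannian metrics on U ⊆ ℝⁿ and X a vector field with L_X g = f·g' for a smooth function f. If q solves the Euler–Lagrange equations of L = (1/2)g_{ij}v^iv^j - V, the function G(t) = g_{ij}(q)X^i(q)q'^j is bounded, and all time averages exist, then ⟨f(q(t))·T'(t) - X^i ∂_i V(q(t))⟩ = 0 where T'(t) = (1/2)g'_{ij}(q(t))q'^i(t)q'^j(t). -/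
open Filter

lemma sum_rev3 {n : ℕ} (F : Fin n → Fin n → Fin n → ℝ) :
    ∑ i, ∑ j, ∑ k, F i j k = ∑ k, ∑ j, ∑ i, F i j k :=
  calc ∑ i, ∑ j, ∑ k, F i j k
      = ∑ i, ∑ k, ∑ j, F i j k := Finset.sum_congr rfl fun _ _ => Finset.sum_comm
    _ = ∑ k, ∑ i, ∑ j, F i j k := Finset.sum_comm
    _ = ∑ k, ∑ j, ∑ i, F i j k := Finset.sum_congr rfl fun _ _ => Finset.sum_comm

lemma sum_rot3 {n : ℕ} (F : Fin n → Fin n → Fin n → ℝ) :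
    ∑ i, ∑ j, ∑ k, F i j k = ∑ k, ∑ i, ∑ j, F i j k :=
  calc ∑ i, ∑ j, ∑ k, F i j k
      = ∑ i, ∑ k, ∑ j, F i j k := Finset.sum_congr rfl fun _ _ => Finset.sum_comm
    _ = ∑ k, ∑ i, ∑ j, F i j k := Finset.sum_comm

lemma aux_alg {n : ℕ} (a b : Fin n → ℝ) (G G' DX : Fin n → Fin n → ℝ)
    (DG : Fin n → Fin n → Fin n → ℝ) (f : ℝ)
    (hsym : ∀ i j, G i j = G j i)
    (hLie : ∀ i j, (∑ k, a k * DG k i j) + (∑ k, G i k * DX k j)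
        + (∑ k, G j k * DX k i) = f * G' i j) :
    ∑ i, ((∑ k, b k * DX i k) * (∑ j, G i j * b j))
      + ∑ i, a i * ((1/2) * ∑ j, ∑ k, DG i j k * b j * b k)
    = f * ((1/2) * ∑ i, ∑ j, G' i j * b i * b j) := by
  set S1 : ℝ := ∑ k, ∑ i, ∑ j, a k * DG k i j * b i * b j with hS1
  set S2 : ℝ := ∑ i, ∑ j, ∑ k, G i k * DX k j * b i * b j with hS2
  have hT2 : ∑ i, a i * ((1/2) * ∑ j, ∑ k, DG i j k * b j * b k) = (1/2) * S1 := by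
    rw [hS1, Finset.mul_sum]
    refine Finset.sum_congr rfl fun i _ => ?_
    simp only [Finset.mul_sum]
    refine Finset.sum_congr rfl fun j _ => Finset.sum_congr rfl fun k _ => ?_
    ring
  have hT1 : ∑ i, ((∑ k, b k * DX i k) * (∑ j, G i j * b j)) = S2 := by
    have e1 : ∑ i, ((∑ k, b k * DX i k) * (∑ j, G i j * b j))
        = ∑ i, ∑ k, ∑ j, G i j * DX i k * b j * b k := by
      refine Finset.sum_congr rfl fun i _ => ?_
      rw [Finset.sum_mul]
      refine Finset.sum_congr rfl fun k _ => ?_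
      rw [Finset.mul_sum]
      refine Finset.sum_congr rfl fun j _ => ?_
      ring
    rw [e1, sum_rev3, hS2]
    refine Finset.sum_congr rfl fun i _ => Finset.sum_congr rfl fun j _ =>
      Finset.sum_congr rfl fun k _ => ?_
    rw [hsym k i]
  rw [hT1, hT2]
  have hR : f * ((1/2) * ∑ i, ∑ j, G' i j * b i * b j)
      = (1/2) * ∑ i, ∑ j, ((∑ k, a k * DG k i j) + (∑ k, G i k * DX k j)
        + (∑ k, G j k * DX k i)) * (b i * b j) := by
    rw [← mul_assoc, mul_comm f (1/2), mul_assoc, Finset.mul_sum]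
    congr 1
    refine Finset.sum_congr rfl fun i _ => ?_
    rw [Finset.mul_sum]
    refine Finset.sum_congr rfl fun j _ => ?_
    rw [hLie i j]
    ring
  rw [hR]
  have expand : ∀ i j : Fin n, ((∑ k, a k * DG k i j) + (∑ k, G i k * DX k j)
        + (∑ k, G j k * DX k i)) * (b i * b j)
      = (∑ k, a k * DG k i j * b i * b j) + (∑ k, G i k * DX k j * b i * b j)
        + (∑ k, G j k * DX k i * b i * b j) := by
    intro i j
    rw [add_mul, add_mul, Finset.sum_mul, Finset.sum_mul, Finset.sum_mul]
    congr 1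
    · congr 1
      · exact Finset.sum_congr rfl fun k _ => by ring
      · exact Finset.sum_congr rfl fun k _ => by ring
    · exact Finset.sum_congr rfl fun k _ => by ring
  have split : ∑ i, ∑ j, (((∑ k, a k * DG k i j) + (∑ k, G i k * DX k j)
        + (∑ k, G j k * DX k i)) * (b i * b j))
      = (∑ i, ∑ j, ∑ k, a k * DG k i j * b i * b j)
        + (∑ i, ∑ j, ∑ k, G i k * DX k j * b i * b j)
        + (∑ i, ∑ j, ∑ k, G j k * DX k i * b i * b j) := by
    simp only [expand, Finset.sum_add_distrib]
  rw [split]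
  have hA1 : ∑ i, ∑ j, ∑ k, a k * DG k i j * b i * b j = S1 := by
    rw [hS1]; exact sum_rot3 _
  have hA3 : ∑ i, ∑ j, ∑ k, G j k * DX k i * b i * b j = S2 := by
    rw [hS2, Finset.sum_comm]
    refine Finset.sum_congr rfl fun i _ => Finset.sum_congr rfl fun j _ =>
      Finset.sum_congr rfl fun k _ => ?_
    ring
  rw [hA1, hA3, ← hS2]
  ring

lemma aux_comp {n : ℕ} {U : Set (Fin n → ℝ)} (hU : IsOpen U)
    {h : (Fin n → ℝ) → ℝ} (hh : ContDiffOn ℝ (⊤ : ℕ∞) h U)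
    {q : ℝ → Fin n → ℝ} (hq : ∀ i, ContDiff ℝ 2 (fun t => q t i))
    (hrange : ∀ t, q t ∈ U) (t : ℝ) :
    HasDerivAt (fun s => h (q s))
      (∑ k, deriv (fun u => q u k) t * fderiv ℝ h (q t) (Pi.single k 1)) t := by
  have hq' : HasDerivAt q (fun i => deriv (fun u => q u i) t) t :=
    hasDerivAt_pi.mpr fun i =>
      (((hq i).differentiable (by norm_num)) t).hasDerivAt
  have hd : DifferentiableAt ℝ h (q t) :=
    (hh.differentiableOn (by simp)).differentiableAt (hU.mem_nhds (hrange t))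
  have := hd.hasFDerivAt.comp_hasDerivAt t hq'
  refine this.congr_deriv (Eq.symm ?_)
  have hv : (fun i => deriv (fun u => q u i) t)
      = ∑ k : Fin n, (deriv (fun u => q u k) t) • (Pi.single k 1 : Fin n → ℝ) := by
    ext j
    simp [Finset.sum_apply, Pi.single_apply]
  rw [hv, map_sum]
  refine Finset.sum_congr rfl fun k _ => ?_
  rw [map_smul]
  simp [mul_comm]


/-- two-metric virial theorem. If `L_X g = f·g'` for a second
metric `g'`, then along bounded-virial solutions of the Euler–Lagrange
equations of `L = ½ g_{ij} v^i v^j - V`,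
`⟨f(q)·T' - X^i ∂_i V(q)⟩ = 0` where `T' = ½ g'_{ij} q'^i q'^j`. -/
theorem two_metric_virial_coords {n : ℕ} (U : Set (Fin n → ℝ)) (hU : IsOpen U)
    (g g' : (Fin n → ℝ) → Fin n → Fin n → ℝ)
    (V f : (Fin n → ℝ) → ℝ) (X : (Fin n → ℝ) → Fin n → ℝ)
    (q : ℝ → Fin n → ℝ)
    (hg : ∀ i j, ContDiffOn ℝ (⊤ : ℕ∞) (fun p => g p i j) U)
    (hg' : ∀ i j, ContDiffOn ℝ (⊤ : ℕ∞) (fun p => g' p i j) U)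
    (hgsym : ∀ p ∈ U, ∀ i j, g p i j = g p j i)
    (hg'sym : ∀ p ∈ U, ∀ i j, g' p i j = g' p j i)
    (hgpos : ∀ p ∈ U, ∀ v : Fin n → ℝ, v ≠ 0 → 0 < ∑ i, ∑ j, g p i j * v i * v j)
    (hg'pos : ∀ p ∈ U, ∀ v : Fin n → ℝ, v ≠ 0 → 0 < ∑ i, ∑ j, g' p i j * v i * v j)
    (hV : ContDiffOn ℝ (⊤ : ℕ∞) V U) (hf : ContDiffOn ℝ (⊤ : ℕ∞) f U)
    (hX : ∀ k, ContDiffOn ℝ (⊤ : ℕ∞) (fun p => X p k) U)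
    (hq : ∀ i, ContDiff ℝ 2 (fun t => q t i))
    (hrange : ∀ t : ℝ, q t ∈ U)
    -- `(L_X g)_{ij} = X^k ∂_k g_{ij} + g_{ik} ∂_j X^k + g_{jk} ∂_i X^k = f·g'_{ij}`
    (hLie : ∀ p ∈ U, ∀ i j : Fin n,
      (∑ k, X p k * fderiv ℝ (fun p' => g p' i j) p (Pi.single k 1))
        + (∑ k, g p i k * fderiv ℝ (fun p' => X p' k) p (Pi.single j 1))
        + (∑ k, g p j k * fderiv ℝ (fun p' => X p' k) p (Pi.single i 1))
      = f p * g' p i j)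
    -- Euler–Lagrange equations for the metric `g`
    (hEL : ∀ (t : ℝ) (i : Fin n),
      deriv (fun s => ∑ j, g (q s) i j * deriv (fun u => q u j) s) t =
        (1 / 2) * (∑ j, ∑ k, fderiv ℝ (fun p => g p j k) (q t) (Pi.single i 1)
            * deriv (fun u => q u j) t * deriv (fun u => q u k) t)
          - fderiv ℝ V (q t) (Pi.single i 1))
    (M : ℝ)
    (hG : ∀ t : ℝ, 0 ≤ t →
      |∑ i, ∑ j, g (q t) i j * X (q t) i * deriv (fun u => q u j) t| ≤ M)
    (A : ℝ)
    (hA : Tendsto (fun τ : ℝ => (1 / τ) * ∫ t in (0:ℝ)..τ,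
        f (q t) * ((1 / 2) * ∑ i, ∑ j, g' (q t) i j
            * deriv (fun u => q u i) t * deriv (fun u => q u j) t)
          - ∑ i, X (q t) i * fderiv ℝ V (q t) (Pi.single i 1)) atTop (nhds A)) :
    A = 0 := by
  -- derivatives of the velocity components
  have hq1 : ∀ i, ContDiff ℝ 1 (deriv (fun u => q u i)) := by
    intro i
    have h2 : ContDiff ℝ (1 + 1) (fun t => q t i) := by
      have := hq i; norm_num at this ⊢; exact this
    exact (contDiff_succ_iff_deriv.mp h2).2.2
  have hq_cont : Continuous q := continuous_pi fun i => (hq i).continuous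
  have hqd_cont : ∀ i, Continuous (deriv (fun u => q u i)) := fun i => (hq1 i).continuous
  have hqd_diff : ∀ (j : Fin n) (t : ℝ),
      HasDerivAt (fun s => deriv (fun u => q u j) s)
        (deriv (deriv (fun u => q u j)) t) t := fun j t =>
    (((hq1 j).differentiable one_ne_zero) t).hasDerivAt
  -- derivative of the momentum-type quantity, via Euler–Lagrange
  have hP : ∀ (t : ℝ) (i : Fin n),
      HasDerivAt (fun s => ∑ j, g (q s) i j * deriv (fun u => q u j) s)
        ((1 / 2) * (∑ j, ∑ k, fderiv ℝ (fun p => g p j k) (q t) (Pi.single i 1)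
            * deriv (fun u => q u j) t * deriv (fun u => q u k) t)
          - fderiv ℝ V (q t) (Pi.single i 1)) t := by
    intro t i
    have h1 : HasDerivAt (fun s => ∑ j, g (q s) i j * deriv (fun u => q u j) s)
        (∑ j, ((∑ k, deriv (fun u => q u k) t
              * fderiv ℝ (fun p => g p i j) (q t) (Pi.single k 1))
            * deriv (fun u => q u j) t
          + g (q t) i j * deriv (deriv (fun u => q u j)) t)) t :=
      HasDerivAt.fun_sum fun j _ => (aux_comp hU (hg i j) hq hrange t).mul (hqd_diff j t)
    have h2 := h1.deriv
    rw [hEL t i] at h2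
    rw [h2]
    exact h1
  -- derivative of the virial G(t)
  have hGd : ∀ t : ℝ,
      HasDerivAt (fun s => ∑ i, ∑ j, g (q s) i j * X (q s) i * deriv (fun u => q u j) s)
        (f (q t) * ((1 / 2) * ∑ i, ∑ j, g' (q t) i j
            * deriv (fun u => q u i) t * deriv (fun u => q u j) t)
          - ∑ i, X (q t) i * fderiv ℝ V (q t) (Pi.single i 1)) t := by
    intro t
    have hfun : (fun s => ∑ i, ∑ j, g (q s) i j * X (q s) i * deriv (fun u => q u j) s)
        = (fun s => ∑ i, X (q s) i * ∑ j, g (q s) i j * deriv (fun u => q u j) s) := by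
      funext s
      refine Finset.sum_congr rfl fun i _ => ?_
      rw [Finset.mul_sum]
      exact Finset.sum_congr rfl fun j _ => by ring
    rw [hfun]
    have h1 : HasDerivAt
        (fun s => ∑ i, X (q s) i * ∑ j, g (q s) i j * deriv (fun u => q u j) s)
        (∑ i, ((∑ k, deriv (fun u => q u k) t
              * fderiv ℝ (fun p => X p i) (q t) (Pi.single k 1))
            * (∑ j, g (q t) i j * deriv (fun u => q u j) t)
          + X (q t) i * ((1 / 2) * (∑ j, ∑ k,
                fderiv ℝ (fun p => g p j k) (q t) (Pi.single i 1)
                  * deriv (fun u => q u j) t * deriv (fun u => q u k) t)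
              - fderiv ℝ V (q t) (Pi.single i 1)))) t :=
      HasDerivAt.fun_sum fun i _ => (aux_comp hU (hX i) hq hrange t).mul (hP t i)
    convert h1 using 1
    have halg :
        ∑ i, ((∑ k, deriv (fun u => q u k) t
              * fderiv ℝ (fun p => X p i) (q t) (Pi.single k 1))
            * (∑ j, g (q t) i j * deriv (fun u => q u j) t))
          + ∑ i, X (q t) i * ((1/2) * ∑ j, ∑ k,
              fderiv ℝ (fun p => g p j k) (q t) (Pi.single i 1)
                * deriv (fun u => q u j) t * deriv (fun u => q u k) t)
        = f (q t) * ((1/2) * ∑ i, ∑ j, g' (q t) i j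
            * deriv (fun u => q u i) t * deriv (fun u => q u j) t) :=
      aux_alg (fun i => X (q t) i) (fun i => deriv (fun u => q u i) t)
        (fun i j => g (q t) i j) (fun i j => g' (q t) i j)
        (fun k d => fderiv ℝ (fun p => X p k) (q t) (Pi.single d 1))
        (fun d j k => fderiv ℝ (fun p => g p j k) (q t) (Pi.single d 1))
        (f (q t)) (fun i j => hgsym _ (hrange t) i j)
        (fun i j => hLie _ (hrange t) i j)
    calc f (q t) * ((1 / 2) * ∑ i, ∑ j, g' (q t) i j
            * deriv (fun u => q u i) t * deriv (fun u => q u j) t)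
          - ∑ i, X (q t) i * fderiv ℝ V (q t) (Pi.single i 1)
        = (∑ i, ((∑ k, deriv (fun u => q u k) t
              * fderiv ℝ (fun p => X p i) (q t) (Pi.single k 1))
            * (∑ j, g (q t) i j * deriv (fun u => q u j) t))
          + ∑ i, X (q t) i * ((1/2) * ∑ j, ∑ k,
              fderiv ℝ (fun p => g p j k) (q t) (Pi.single i 1)
                * deriv (fun u => q u j) t * deriv (fun u => q u k) t))
          - ∑ i, X (q t) i * fderiv ℝ V (q t) (Pi.single i 1) := by rw [halg]
      _ = _ := by
          rw [← Finset.sum_add_distrib, ← Finset.sum_sub_distrib]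
          exact Finset.sum_congr rfl fun i _ => by ring
  -- continuity of the integrand
  have hVd : ContinuousOn (fderiv ℝ V) U := hV.continuousOn_fderiv_of_isOpen hU (by simp)
  have hfderivV : ∀ i : Fin n,
      Continuous (fun t => fderiv ℝ V (q t) (Pi.single i 1)) := fun i =>
    (hVd.comp_continuous hq_cont hrange).clm_apply continuous_const
  have hFcont : Continuous (fun t =>
      f (q t) * ((1 / 2) * ∑ i, ∑ j, g' (q t) i j
          * deriv (fun u => q u i) t * deriv (fun u => q u j) t)
        - ∑ i, X (q t) i * fderiv ℝ V (q t) (Pi.single i 1)) := by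
    apply Continuous.sub
    · exact (hf.continuousOn.comp_continuous hq_cont hrange).mul
        (continuous_const.mul (continuous_finset_sum _ fun i _ =>
          continuous_finset_sum _ fun j _ =>
            (((hg' i j).continuousOn.comp_continuous hq_cont hrange).mul
              (hqd_cont i)).mul (hqd_cont j)))
    · exact continuous_finset_sum _ fun i _ =>
        ((hX i).continuousOn.comp_continuous hq_cont hrange).mul (hfderivV i)
  -- fundamental theorem of calculus
  have hint : ∀ τ : ℝ,
      (∫ t in (0:ℝ)..τ, f (q t) * ((1 / 2) * ∑ i, ∑ j, g' (q t) i j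
          * deriv (fun u => q u i) t * deriv (fun u => q u j) t)
        - ∑ i, X (q t) i * fderiv ℝ V (q t) (Pi.single i 1))
      = (∑ i, ∑ j, g (q τ) i j * X (q τ) i * deriv (fun u => q u j) τ)
        - (∑ i, ∑ j, g (q 0) i j * X (q 0) i * deriv (fun u => q u j) 0) := fun τ =>
    intervalIntegral.integral_eq_sub_of_hasDerivAt (fun t _ => hGd t)
      (hFcont.intervalIntegrable 0 τ)
  -- the bounded virial forces the average to vanish
  have hM0 : 0 ≤ M := le_trans (abs_nonneg _) (hG 0 le_rfl)
  have hB : Tendsto (fun τ : ℝ => (1 / τ) *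
      ((∑ i, ∑ j, g (q τ) i j * X (q τ) i * deriv (fun u => q u j) τ)
        - (∑ i, ∑ j, g (q 0) i j * X (q 0) i * deriv (fun u => q u j) 0)))
      atTop (nhds 0) := by
    have h2 : Tendsto (fun τ : ℝ => (2 * M) * (1 / τ)) atTop (nhds 0) := by
      simpa [one_div] using tendsto_inv_atTop_zero.const_mul (2 * M)
    refine squeeze_zero_norm' ?_ h2
    filter_upwards [eventually_ge_atTop (1:ℝ)] with τ hτ
    have hτ0 : 0 < τ := lt_of_lt_of_le one_pos hτ
    rw [Real.norm_eq_abs, abs_mul, abs_of_pos (by positivity : (0:ℝ) < 1/τ)]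
    have hbd : |(∑ i, ∑ j, g (q τ) i j * X (q τ) i * deriv (fun u => q u j) τ)
        - (∑ i, ∑ j, g (q 0) i j * X (q 0) i * deriv (fun u => q u j) 0)| ≤ 2 * M := by
      calc |(∑ i, ∑ j, g (q τ) i j * X (q τ) i * deriv (fun u => q u j) τ)
          - (∑ i, ∑ j, g (q 0) i j * X (q 0) i * deriv (fun u => q u j) 0)|
          ≤ |∑ i, ∑ j, g (q τ) i j * X (q τ) i * deriv (fun u => q u j) τ|
            + |∑ i, ∑ j, g (q 0) i j * X (q 0) i * deriv (fun u => q u j) 0| :=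
            abs_sub _ _
        _ ≤ M + M := add_le_add (hG τ hτ0.le) (hG 0 le_rfl)
        _ = 2 * M := by ring
    calc (1/τ) * |(∑ i, ∑ j, g (q τ) i j * X (q τ) i * deriv (fun u => q u j) τ)
          - (∑ i, ∑ j, g (q 0) i j * X (q 0) i * deriv (fun u => q u j) 0)|
        ≤ (1/τ) * (2 * M) := by
          exact mul_le_mul_of_nonneg_left hbd (by positivity)
      _ = (2 * M) * (1 / τ) := by ring
  have hA' : Tendsto (fun τ : ℝ => (1 / τ) * ∫ t in (0:ℝ)..τ,
      f (q t) * ((1 / 2) * ∑ i, ∑ j, g' (q t) i j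
          * deriv (fun u => q u i) t * deriv (fun u => q u j) t)
        - ∑ i, X (q t) i * fderiv ℝ V (q t) (Pi.single i 1)) atTop (nhds 0) := by
    simp only [hint]
    exact hB
  exact tendsto_nhds_unique hA hA'
end
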